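/- Let 0<q<1 and let a, b be real numbers with 0<a<b. Write E = exp( [ Li₂(1−q^b) − Li₂(1−q^a) ] / log q ). Then [ ((1−q^b)/(1−q))^{b−1} / ((1−q^a)/(1−q))^{a−1} ] · E ≤ Γ_q(b)/Γ_q(a) ≤ [ ((1−q^b)/(1−q))^{b−1/2} / ((1−q^a)/(1−q))^{a−1/2} ] · E. -/

import Mathlib

/-- The `q`-gamma function for `0 < q < 1`:
`Γ_q(x) = (1−q)^(1−x) ∏_{j=0}^∞ (1−q^(j+1))/(1−q^(j+x))`. -/
noncomputable def qGamma (q x : ℝ) : ℝ :=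
  (1 - q) ^ (1 - x) * ∏' j : ℕ, (1 - q ^ (j + 1)) / (1 - q ^ ((j : ℝ) + x))

/-- The dilogarithm `Li₂(z) = −∫₀^z log(1−t)/t dt`. -/
noncomputable def dilog (z : ℝ) : ℝ := -∫ t in (0:ℝ)..z, Real.log (1 - t) / t

/-!
With `Φ_c(x) = log Γ_q(x) − (x − c) log((1 − q^x)/(1 − q)) − Li₂(1 − q^x)/log q`, the two bounds
say exactly `Φ_1(a) ≤ Φ_1(b)` and `Φ_{1/2}(b) ≤ Φ_{1/2}(a)`. Since
`log Γ_q(x) = (1 − x) log(1 − q) + ∑ⱼ log(1 − q^(j+1)) − ∑ⱼ log(1 − q^(j+x))`, the derivative of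
`Φ_c` can be expanded in powers of `y = q^x` (the `q`-digamma part through a Lambert series):
`Φ_c'(x) = ∑_{n ≥ 1} yⁿ/n · (log t/(1 − t) + 1 − c log t)` with `t = qⁿ`. The bracket is
nonnegative for `c = 1` because `t log t ≥ t − 1`, and nonpositive for `c = 1/2` because
`log(1/t) ≥ 2(1 − t)/(1 + t)`.
-/

open Real Filter MeasureTheory intervalIntegral Set Topology

lemma two_mul_one_sub_div_one_add_le_neg_log {t : ℝ} (ht0 : 0 < t) (ht1 : t < 1) :
    2 * ((1 - t) / (1 + t)) ≤ -log t := by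
  set u := (1 - t) / (1 + t) with hu
  have hu0 : 0 ≤ u := div_nonneg (by linarith) (by linarith)
  have hu1 : u < 1 := (div_lt_one (by linarith)).2 (by linarith)
  have hplus : 1 + u = 2 / (1 + t) := by rw [hu]; field_simp; ring
  have hminus : 1 - u = 2 * t / (1 + t) := by rw [hu]; field_simp; ring
  have hlog : log (1 + u) - log (1 - u) = -log t := by
    rw [hplus, hminus, ← log_div (by positivity) (by positivity), ← log_inv]
    congr 1
    field_simp
  rw [← hlog]
  simpa using le_hasSum (hasSum_log_sub_log_of_abs_lt_one (abs_lt.2 ⟨by linarith, hu1⟩)) 0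
    fun k _ => by positivity

noncomputable def phiCoeff (c t : ℝ) : ℝ := log t / (1 - t) + 1 - c * log t

lemma phiCoeff_one_nonneg {t : ℝ} (ht0 : 0 < t) (ht1 : t < 1) : 0 ≤ phiCoeff 1 t := by
  have h1t : 0 < 1 - t := by linarith
  have hlog : t - 1 ≤ t * log t := by
    have := mul_le_mul_of_nonneg_left (one_sub_inv_le_log_of_pos ht0) ht0.le
    rwa [mul_sub, mul_one, mul_inv_cancel₀ ht0.ne'] at this
  have : phiCoeff 1 t = (t * log t + (1 - t)) / (1 - t) := by
    unfold phiCoeff; field_simp; ring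
  rw [this]
  exact div_nonneg (by linarith) h1t.le

lemma phiCoeff_half_nonpos {t : ℝ} (ht0 : 0 < t) (ht1 : t < 1) : phiCoeff (1 / 2) t ≤ 0 := by
  have h1t : 0 < 1 - t := by linarith
  have hlog := two_mul_one_sub_div_one_add_le_neg_log ht0 ht1
  rw [mul_div_assoc', div_le_iff₀ (by linarith)] at hlog
  have : phiCoeff (1 / 2) t = (log t * (1 + t) + 2 * (1 - t)) / (2 * (1 - t)) := by
    unfold phiCoeff; field_simp; ring
  rw [this]
  exact div_nonpos_of_nonpos_of_nonneg (by linarith) (by positivity)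

lemma hasSum_pow_succ_of_abs_lt_one {r : ℝ} (h : |r| < 1) :
    HasSum (fun n : ℕ => r ^ (n + 1)) (r / (1 - r)) := by
  simpa [pow_succ', div_eq_mul_inv] using (hasSum_geometric_of_abs_lt_one h).mul_left r

lemma norm_log_one_sub_div_le {t z : ℝ} (ht0 : 0 < t) (htz : t ≤ z) (hz1 : z < 1) :
    ‖log (1 - t) / t‖ ≤ (1 - z)⁻¹ := by
  have h1t : 0 < 1 - t := by linarith
  have hlog := one_sub_inv_le_log_of_pos h1t
  rw [Real.norm_eq_abs, abs_div, abs_of_nonpos (log_nonpos h1t.le (by linarith)),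
    abs_of_pos ht0, div_le_iff₀ ht0]
  calc -log (1 - t) ≤ t / (1 - t) := by
        rw [show t / (1 - t) = (1 - t)⁻¹ - 1 by field_simp; ring]; linarith
    _ ≤ t / (1 - z) := div_le_div_of_nonneg_left ht0.le (by linarith) (by linarith)
    _ = (1 - z)⁻¹ * t := by ring

lemma intervalIntegrable_log_one_sub_div {z : ℝ} (hz0 : 0 ≤ z) (hz1 : z < 1) :
    IntervalIntegrable (fun t => log (1 - t) / t) volume 0 z := by
  rw [intervalIntegrable_iff_integrableOn_Ioc_of_le hz0]
  refine Measure.integrableOn_of_bounded (M := (1 - z)⁻¹) measure_Ioc_lt_top.ne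
    (((measurable_log.comp (measurable_const.sub measurable_id)).div
      measurable_id).aestronglyMeasurable)
    ((ae_restrict_iff' measurableSet_Ioc).2 (.of_forall fun t ht => ?_))
  exact norm_log_one_sub_div_le ht.1 ht.2 hz1

lemma hasDerivAt_dilog {z : ℝ} (hz0 : 0 < z) (hz1 : z < 1) :
    HasDerivAt dilog (-(log (1 - z) / z)) z := by
  have hcont : ContinuousOn (fun t => log (1 - t) / t) (Ioo 0 1) :=
    ((continuousOn_const.sub continuousOn_id).log fun t ht => (sub_pos.2 ht.2).ne').div
      continuousOn_id fun t ht => ht.1.ne'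
  have hz : Ioo (0 : ℝ) 1 ∈ 𝓝 z := isOpen_Ioo.mem_nhds ⟨hz0, hz1⟩
  exact (integral_hasDerivAt_right (intervalIntegrable_log_one_sub_div hz0.le hz1)
    (hcont.stronglyMeasurableAtFilter isOpen_Ioo z ⟨hz0, hz1⟩) (hcont.continuousAt hz)).neg

noncomputable def logQPochhammer (q y : ℝ) : ℝ := ∑' j : ℕ, log (1 - y * q ^ j)

noncomputable def qGammaPhi (q c x : ℝ) : ℝ :=
  log (qGamma q x) - (x - c) * log ((1 - q ^ x) / (1 - q)) - dilog (1 - q ^ x) / log q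

section
variable {q : ℝ}

lemma summable_log_one_sub_mul_pow (hq0 : 0 ≤ q) (hq1 : q < 1) (y : ℝ) :
    Summable fun j : ℕ => log (1 - y * q ^ j) := by
  simpa [neg_mul, ← sub_eq_add_neg] using
    summable_log_one_add_of_summable ((summable_geometric_of_lt_one hq0 hq1).mul_left (-y))

lemma qGamma_eq (hq0 : 0 < q) (hq1 : q < 1) {x : ℝ} (hx : 0 < x) :
    qGamma q x = (1 - q) ^ (1 - x) * exp (logQPochhammer q q - logQPochhammer q (q ^ x)) := by
  have hfactor : ∀ y : ℝ, y < 1 → ∀ j : ℕ, 0 < 1 - y * q ^ j := fun y hy j => by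
    nlinarith [pow_le_one₀ hq0.le hq1.le (n := j), pow_pos hq0 j]
  have hterm : ∀ j : ℕ, (1 - q ^ (j + 1)) / (1 - q ^ ((j : ℝ) + x))
      = (1 - q * q ^ j) / (1 - q ^ x * q ^ j) := fun j => by
    rw [pow_succ', rpow_add hq0, rpow_natCast, mul_comm (q ^ j)]
  have hqx : q ^ x < 1 := rpow_lt_one hq0.le hq1 hx
  have hs₁ := summable_log_one_sub_mul_pow hq0.le hq1 q
  have hs₂ := summable_log_one_sub_mul_pow hq0.le hq1 (q ^ x)
  have hlog : ∀ j : ℕ, log ((1 - q * q ^ j) / (1 - q ^ x * q ^ j))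
      = log (1 - q * q ^ j) - log (1 - q ^ x * q ^ j) := fun j =>
    log_div (hfactor q hq1 j).ne' (hfactor _ hqx j).ne'
  unfold qGamma logQPochhammer
  simp_rw [hterm]
  rw [← rexp_tsum_eq_tprod (fun j => div_pos (hfactor q hq1 j) (hfactor _ hqx j))
    (by simpa only [hlog] using hs₁.sub hs₂), tsum_congr hlog, hs₁.tsum_sub hs₂]

lemma log_qGamma (hq0 : 0 < q) (hq1 : q < 1) {x : ℝ} (hx : 0 < x) :
    log (qGamma q x) = (1 - x) * log (1 - q) + logQPochhammer q q - logQPochhammer q (q ^ x) := by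
  rw [qGamma_eq hq0 hq1 hx, log_mul (by positivity [sub_pos.2 hq1]) (exp_ne_zero _),
    log_rpow (sub_pos.2 hq1), log_exp]
  ring

lemma hasDerivAt_logQPochhammer (hq0 : 0 ≤ q) (hq1 : q < 1) {y : ℝ} (hy : y < 1) :
    HasDerivAt (logQPochhammer q) (-∑' j : ℕ, q ^ j / (1 - y * q ^ j)) y := by
  set r := (1 + max y 0) / 2
  have hr0 : 0 < r := by positivity
  have hr1 : r < 1 := by have := max_lt hy one_pos; simp only [r]; linarith
  have hyr : y < r := by have := le_max_left y 0; simp only [r]; linarith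
  have hfactor : ∀ z < r, ∀ j : ℕ, 1 - r ≤ 1 - z * q ^ j := fun z hz j => by
    nlinarith [pow_le_one₀ hq0 hq1.le (n := j), pow_nonneg hq0 j]
  have hderiv : ∀ (j : ℕ), ∀ z ∈ Iio r,
      HasDerivAt (fun z => log (1 - z * q ^ j)) (-(q ^ j / (1 - z * q ^ j))) z := by
    intro j z hz
    simpa [neg_div] using
      (((hasDerivAt_id z).mul_const (q ^ j)).const_sub 1).log
        (by linarith [hfactor z hz j] : 1 - z * q ^ j ≠ 0)
  have hbound : ∀ (j : ℕ), ∀ z ∈ Iio r, ‖-(q ^ j / (1 - z * q ^ j))‖ ≤ (1 - r)⁻¹ * q ^ j := by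
    intro j z hz
    have := hfactor z hz j
    rw [norm_neg, Real.norm_of_nonneg (div_nonneg (pow_nonneg hq0 j) (by linarith)),
      inv_mul_eq_div]
    exact div_le_div_of_nonneg_left (pow_nonneg hq0 j) (by linarith) this
  have := hasDerivAt_tsum_of_isPreconnected
    ((summable_geometric_of_lt_one hq0 hq1).mul_left _) isOpen_Iio isPreconnected_Iio
    hderiv hbound hyr (summable_log_one_sub_mul_pow hq0 hq1 y) hyr
  rwa [tsum_neg] at this

lemma hasSum_lambert (hq0 : 0 ≤ q) (hq1 : q < 1) {y : ℝ} (hy0 : 0 ≤ y) (hy1 : y < 1) :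
    HasSum (fun n : ℕ => y ^ (n + 1) / (1 - q ^ (n + 1)))
      (y * ∑' j : ℕ, q ^ j / (1 - y * q ^ j)) := by
  have hyq0 : ∀ j : ℕ, 0 ≤ y * q ^ j := fun j => by positivity
  have hyq1 : ∀ j : ℕ, y * q ^ j ≤ y := fun j => mul_le_of_le_one_right hy0 (pow_le_one₀ hq0 hq1.le)
  have hrow : ∀ j : ℕ, HasSum (fun n : ℕ => (y * q ^ j) ^ (n + 1)) (y * q ^ j / (1 - y * q ^ j)) :=
    fun j => hasSum_pow_succ_of_abs_lt_one (abs_lt.2 ⟨by linarith [hyq0 j], (hyq1 j).trans_lt hy1⟩)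
  have hcol : ∀ n : ℕ,
      HasSum (fun j : ℕ => (y * q ^ j) ^ (n + 1)) (y ^ (n + 1) / (1 - q ^ (n + 1))) := by
    intro n
    have := (hasSum_geometric_of_lt_one (pow_nonneg hq0 (n + 1))
      (pow_lt_one₀ hq0 hq1 n.succ_ne_zero)).mul_left (y ^ (n + 1))
    simpa only [mul_pow, ← pow_mul, mul_comm (n + 1), div_eq_mul_inv] using this
  have hrowSum : Summable fun j : ℕ => y * q ^ j / (1 - y * q ^ j) := by
    refine .of_nonneg_of_le (fun j => div_nonneg (hyq0 j) (by linarith [hyq1 j]))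
      (fun j => ?_) ((summable_geometric_of_lt_one hq0 hq1).mul_left (y / (1 - y)))
    rw [div_mul_eq_mul_div]
    exact div_le_div_of_nonneg_left (hyq0 j) (by linarith) (by linarith [hyq1 j])
  -- the nonnegative double series `∑ (y qʲ)^(n+1)`, summed by rows and by columns
  have hF : Summable fun p : ℕ × ℕ => (y * q ^ p.1) ^ (p.2 + 1) := by
    rw [summable_prod_of_nonneg fun p => pow_nonneg (hyq0 p.1) _]
    exact ⟨fun j => (hrow j).summable, hrowSum.congr fun j => (hrow j).tsum_eq.symm⟩
  have hbyRows := hF.hasSum.prod_fiberwise hrow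
  have hbyCols := ((Equiv.prodComm ℕ ℕ).hasSum_iff.2 hF.hasSum).prod_fiberwise hcol
  rw [← tsum_mul_left]
  simp_rw [← mul_div_assoc]
  rwa [← hbyRows.tsum_eq] at hbyCols

lemma hasSum_phiCoeff (hq0 : 0 < q) (hq1 : q < 1) (c : ℝ) {y : ℝ} (hy0 : 0 ≤ y) (hy1 : y < 1) :
    HasSum (fun n : ℕ => y ^ (n + 1) / (n + 1) * phiCoeff c (q ^ (n + 1)))
      (log q * (y * ∑' j : ℕ, q ^ j / (1 - y * q ^ j)) - log (1 - y)
        - c * log q * (y / (1 - y))) := by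
  have hy : |y| < 1 := abs_lt.2 ⟨by linarith, hy1⟩
  have h := (((hasSum_lambert hq0.le hq1 hy0 hy1).mul_left (log q)).add
    (hasSum_pow_div_log_of_abs_lt_one hy)).sub
    ((hasSum_pow_succ_of_abs_lt_one hy).mul_left (c * log q))
  rw [← sub_eq_add_neg] at h
  refine h.congr_fun fun n => ?_
  have : (1 : ℝ) - q ^ (n + 1) ≠ 0 := (sub_pos.2 (pow_lt_one₀ hq0.le hq1 n.succ_ne_zero)).ne'
  simp only [phiCoeff, log_pow]
  push_cast
  field_simp

lemma hasDerivAt_qGammaPhi (hq0 : 0 < q) (hq1 : q < 1) (c : ℝ) {x : ℝ} (hx : 0 < x) :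
    HasDerivAt (qGammaPhi q c)
      (∑' n : ℕ, (q ^ x) ^ (n + 1) / (n + 1) * phiCoeff c (q ^ (n + 1))) x := by
  have hqx0 : 0 < q ^ x := rpow_pos_of_pos hq0 x
  have hqx1 : q ^ x < 1 := rpow_lt_one hq0.le hq1 hx
  have hpow : HasDerivAt (fun x => q ^ x) (q ^ x * log q) x :=
    (hasStrictDerivAt_const_rpow hq0 x).hasDerivAt
  have hlogΓ : HasDerivAt (fun x => log (qGamma q x))
      ((-1) * log (1 - q) - (-∑' j : ℕ, q ^ j / (1 - q ^ x * q ^ j)) * (q ^ x * log q)) x := by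
    refine ((((hasDerivAt_id x).const_sub 1).mul_const (log (1 - q))).add_const
      (logQPochhammer q q) |>.sub ((hasDerivAt_logQPochhammer hq0.le hq1 hqx1).comp x hpow))
      |>.congr_of_eventuallyEq ?_
    filter_upwards [lt_mem_nhds hx] with x hx using log_qGamma hq0 hq1 hx
  have hlogRatio := ((hpow.const_sub 1).div_const (1 - q)).log
    (div_pos (sub_pos.2 hqx1) (sub_pos.2 hq1)).ne'
  have hdilog := (hasDerivAt_dilog (sub_pos.2 hqx1) (by linarith)).comp x (hpow.const_sub 1)
  have := (hlogΓ.sub (((hasDerivAt_id x).sub_const c).mul hlogRatio)).sub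
    (hdilog.div_const (log q))
  rw [(hasSum_phiCoeff hq0 hq1 c hqx0.le hqx1).tsum_eq]
  refine this.congr_deriv ?_
  have hlogq : log q ≠ 0 := (log_neg hq0 hq1).ne
  have h1qx : 1 - q ^ x ≠ 0 := (sub_pos.2 hqx1).ne'
  have h1q : 1 - q ≠ 0 := (sub_pos.2 hq1).ne'
  rw [id_eq, sub_sub_cancel, log_rpow hq0, log_div h1qx h1q]
  generalize ∑' j : ℕ, q ^ j / (1 - q ^ x * q ^ j) = S
  field_simp
  ring

lemma qGammaPhi_one_monotoneOn (hq0 : 0 < q) (hq1 : q < 1) :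
    MonotoneOn (qGammaPhi q 1) (Ioi 0) := by
  have hΦ := fun {x : ℝ} (hx : x ∈ Ioi 0) => hasDerivAt_qGammaPhi hq0 hq1 1 hx
  refine monotoneOn_of_deriv_nonneg (convex_Ioi 0)
    (fun x hx => (hΦ hx).continuousAt.continuousWithinAt) (fun x hx => ?_) fun x hx => ?_ <;>
    rw [interior_Ioi] at hx
  · exact (hΦ hx).differentiableAt.differentiableWithinAt
  · rw [(hΦ hx).deriv]
    exact tsum_nonneg fun n => mul_nonneg (by positivity)
      (phiCoeff_one_nonneg (pow_pos hq0 _) (pow_lt_one₀ hq0.le hq1 n.succ_ne_zero))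

lemma qGammaPhi_half_antitoneOn (hq0 : 0 < q) (hq1 : q < 1) :
    AntitoneOn (qGammaPhi q (1 / 2)) (Ioi 0) := by
  have hΦ := fun {x : ℝ} (hx : x ∈ Ioi 0) => hasDerivAt_qGammaPhi hq0 hq1 (1 / 2) hx
  refine antitoneOn_of_deriv_nonpos (convex_Ioi 0)
    (fun x hx => (hΦ hx).continuousAt.continuousWithinAt) (fun x hx => ?_) fun x hx => ?_ <;>
    rw [interior_Ioi] at hx
  · exact (hΦ hx).differentiableAt.differentiableWithinAt
  · rw [(hΦ hx).deriv]
    exact tsum_nonpos fun n => mul_nonpos_of_nonneg_of_nonpos (by positivity)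
      (phiCoeff_half_nonpos (pow_pos hq0 _) (pow_lt_one₀ hq0.le hq1 n.succ_ne_zero))

lemma one_sub_rpow_div_one_sub_pos (hq0 : 0 < q) (hq1 : q < 1) {x : ℝ} (hx : 0 < x) :
    0 < (1 - q ^ x) / (1 - q) :=
  div_pos (sub_pos.2 (rpow_lt_one hq0.le hq1 hx)) (sub_pos.2 hq1)

lemma qGamma_pos (hq0 : 0 < q) (hq1 : q < 1) {x : ℝ} (hx : 0 < x) : 0 < qGamma q x := by
  rw [qGamma_eq hq0 hq1 hx]
  exact mul_pos (rpow_pos_of_pos (sub_pos.2 hq1) _) (exp_pos _)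

lemma qGamma_div_qGamma_eq (hq0 : 0 < q) (hq1 : q < 1) (c : ℝ) {a b : ℝ} (ha : 0 < a)
    (hb : 0 < b) :
    qGamma q b / qGamma q a
      = ((1 - q ^ b) / (1 - q)) ^ (b - c) / ((1 - q ^ a) / (1 - q)) ^ (a - c) *
        exp ((dilog (1 - q ^ b) - dilog (1 - q ^ a)) / log q) *
        exp (qGammaPhi q c b - qGammaPhi q c a) := by
  rw [← exp_log (div_pos (qGamma_pos hq0 hq1 hb) (qGamma_pos hq0 hq1 ha)),
    log_div (qGamma_pos hq0 hq1 hb).ne' (qGamma_pos hq0 hq1 ha).ne',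
    rpow_def_of_pos (one_sub_rpow_div_one_sub_pos hq0 hq1 hb),
    rpow_def_of_pos (one_sub_rpow_div_one_sub_pos hq0 hq1 ha), ← exp_sub, ← exp_add, ← exp_add]
  congr 1
  unfold qGammaPhi
  ring
end

/-- For `0 < q < 1` and `0 < a < b`, with `E = exp((Li₂(1−q^b) − Li₂(1−q^a))/log q)`,
`[((1−q^b)/(1−q))^(b−1) / ((1−q^a)/(1−q))^(a−1)]·E ≤ Γ_q(b)/Γ_q(a)
≤ [((1−q^b)/(1−q))^(b−1/2) / ((1−q^a)/(1−q))^(a−1/2)]·E`. -/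
theorem qGamma_ratio_bounds (q a b : ℝ) (hq0 : 0 < q) (hq1 : q < 1)
    (ha : 0 < a) (hab : a < b) :
    ((1 - q ^ b) / (1 - q)) ^ (b - 1) / ((1 - q ^ a) / (1 - q)) ^ (a - 1) *
        Real.exp ((dilog (1 - q ^ b) - dilog (1 - q ^ a)) / Real.log q)
      ≤ qGamma q b / qGamma q a ∧
    qGamma q b / qGamma q a
      ≤ ((1 - q ^ b) / (1 - q)) ^ (b - 1 / 2) / ((1 - q ^ a) / (1 - q)) ^ (a - 1 / 2) *
        Real.exp ((dilog (1 - q ^ b) - dilog (1 - q ^ a)) / Real.log q) := by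
  have hb : 0 < b := ha.trans hab
  have hA := one_sub_rpow_div_one_sub_pos hq0 hq1 ha
  have hB := one_sub_rpow_div_one_sub_pos hq0 hq1 hb
  constructor
  · rw [qGamma_div_qGamma_eq hq0 hq1 1 ha hb]
    refine le_mul_of_one_le_right (by positivity) (one_le_exp ?_)
    exact sub_nonneg.2 (qGammaPhi_one_monotoneOn hq0 hq1 ha hb hab.le)
  · rw [qGamma_div_qGamma_eq hq0 hq1 (1 / 2) ha hb]
    refine mul_le_of_le_one_right (by positivity) (exp_le_one_iff.2 ?_)
    exact sub_nonpos.2 (qGammaPhi_half_antitoneOn hq0 hq1 ha hb hab.le)
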